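/- Let K be a separable complex Hilbert space and let W ⊆ L²(𝕋,H²_K) be a full-Hardy subspace with base J. Then the wandering subspace R = W ⊖ Ŝ(W) for Ŝ is reducing for the bilateral shift U, and its associated measurable range function is given by J_R(λ) = J(λ) for a.e. λ ∈ 𝕋, where J(λ) ⊆ K is regarded as the subspace of constant K-valued functions inside H²_K (equivalently, J_R(λ) = H²_{J(λ)} ⊖ S(H²_{J(λ)}) for a.e. λ). -/

import Mathlib

noncomputable section

open MeasureTheory Complex Submodule
open scoped InnerProductSpace ENNReal ComplexConjugate

set_option synthInstance.maxHeartbeats 1000000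
set_option maxHeartbeats 1600000

namespace ShiftPaper

instance : Fact ((0:ℝ) < 1) := ⟨one_pos⟩

/-- The circle, modelled as `ℝ/ℤ`. -/
abbrev 𝕋 : Type := UnitAddCircle

/-- The normalized Haar (Lebesgue) probability measure on the circle. -/
abbrev μT : Measure 𝕋 := AddCircle.haarAddCircle

/-- The space `L²(𝕋, E)` of square-integrable `E`-valued functions on the circle. -/
abbrev L2 (E : Type*) [NormedAddCommGroup E] := Lp E 2 μT

lemma norm_fourier (n : ℤ) (t : 𝕋) : ‖fourier n t‖ = 1 := by
  rw [fourier_apply, Circle.norm_coe]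

section mulF

variable {E : Type*} [NormedAddCommGroup E] [NormedSpace ℂ E]

lemma memLp_mulF (n : ℤ) (f : L2 E) :
    MemLp (fun t => fourier n t • (f : 𝕋 → E) t) 2 μT := by
  refine MemLp.of_le (Lp.memLp f)
    (((fourier n).continuous.aestronglyMeasurable).smul (Lp.aestronglyMeasurable f)) ?_
  refine Filter.Eventually.of_forall fun t => ?_
  rw [norm_smul, norm_fourier, one_mul]

/-- Multiplication by `fourier n` (i.e. by `λ ↦ λⁿ`) as a bounded operator on `L²(𝕋, E)`.
For `n = 1` this is the bilateral shift `U`; for general `n : ℤ` it is `Uⁿ`. -/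
def mulF (n : ℤ) : L2 E →L[ℂ] L2 E :=
  LinearMap.mkContinuous
    { toFun := fun f => (memLp_mulF n f).toLp _
      map_add' := fun f g => by
        rw [← MemLp.toLp_add (memLp_mulF n f) (memLp_mulF n g)]
        refine MemLp.toLp_congr _ _ ?_
        filter_upwards [Lp.coeFn_add f g] with t ht
        simp only [ht, Pi.add_apply, smul_add]
      map_smul' := fun c f => by
        simp only [RingHom.id_apply]
        rw [← MemLp.toLp_const_smul c (memLp_mulF n f)]
        refine MemLp.toLp_congr _ _ ?_
        filter_upwards [Lp.coeFn_smul c f] with t ht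
        rw [ht]
        simp only [Pi.smul_apply]
        rw [smul_comm] }
    1
    (fun f => by
      simp only [LinearMap.coe_mk, AddHom.coe_mk, one_mul]
      rw [Lp.norm_toLp _ (memLp_mulF n f), Lp.norm_def]
      refine le_of_eq (congrArg ENNReal.toReal ?_)
      refine eLpNorm_congr_norm_ae ?_
      refine Filter.Eventually.of_forall fun t => ?_
      rw [norm_smul, norm_fourier, one_mul])

lemma coeFn_mulF (n : ℤ) (f : L2 E) :
    (mulF n f : 𝕋 → E) =ᵐ[μT] fun t => fourier n t • (f : 𝕋 → E) t :=
  MemLp.coeFn_toLp (memLp_mulF n f)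

end mulF

section HardySpace

variable (K : Type) [NormedAddCommGroup K] [InnerProductSpace ℂ K] [CompleteSpace K]

/-- The continuous function `t ↦ fourier n t • x`. -/
def fourierSmulCM (n : ℤ) (x : K) : C(𝕋, K) :=
  ⟨fun t => fourier n t • x, (fourier n).continuous.smul continuous_const⟩

/-- The element of `L²(𝕋, K)` given by `t ↦ fourier n t • x`. -/
def expVec (n : ℤ) (x : K) : L2 K := ContinuousMap.toLp 2 μT ℂ (fourierSmulCM K n x)

lemma coeFn_expVec (n : ℤ) (x : K) :
    (expVec K n x : 𝕋 → K) =ᵐ[μT] fun t => fourier n t • x :=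
  ContinuousMap.coeFn_toLp (𝕜 := ℂ) μT (fourierSmulCM K n x)

/-- The Hardy space `H²(𝕋, K)`, as the subspace of `L²(𝕋, K)` of functions all of whose
weak Fourier coefficients of negative index vanish (equivalently, all of whose coordinate
functions with respect to an orthonormal basis of `K` lie in the scalar Hardy space `H²`). -/
def Hardy : Submodule ℂ (L2 K) :=
  ⨅ (n : ℤ) (_ : n < 0) (x : K), LinearMap.ker (innerSL ℂ (expVec K n x) : L2 K →ₗ[ℂ] ℂ)

lemma isClosed_Hardy : IsClosed ((Hardy K : Set (L2 K))) := by
  have h : (Hardy K : Set (L2 K)) = ⋂ (n : ℤ) (_ : n < 0) (x : K),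
      ((LinearMap.ker (innerSL ℂ (expVec K n x) : L2 K →ₗ[ℂ] ℂ) : Submodule ℂ (L2 K)) : Set (L2 K)) := by
    simp only [Hardy, Submodule.coe_iInf]
  rw [h]
  exact isClosed_iInter fun n => isClosed_iInter fun _ => isClosed_iInter fun x =>
    (ContinuousLinearMap.isClosed_ker _)

/-- The Hardy space `H²(𝕋, K)` as a Hilbert space in its own right. -/
abbrev H2 := ↥(Hardy K)

instance : CompleteSpace (H2 K) := (isClosed_Hardy K).completeSpace_coe

end HardySpace


section Shift

variable (K : Type) [NormedAddCommGroup K] [InnerProductSpace ℂ K] [CompleteSpace K]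

lemma inner_expVec_mulF (n : ℤ) (x : K) (f : L2 K) :
    (inner ℂ (expVec K n x) (mulF 1 f) : ℂ) = inner ℂ (expVec K (n - 1) x) f := by
  rw [MeasureTheory.L2.inner_def, MeasureTheory.L2.inner_def]
  refine integral_congr_ae ?_
  filter_upwards [coeFn_mulF 1 f, coeFn_expVec K n x, coeFn_expVec K (n-1) x] with t h1 h2 h3
  rw [h1, h2, h3, inner_smul_left, inner_smul_left, inner_smul_right,
    ← fourier_neg, ← fourier_neg, ← mul_assoc, ← fourier_add]
  have h : -n + 1 = -(n - 1) := by ring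
  rw [h]

lemma mulF_mem_hardy {f : L2 K} (hf : f ∈ Hardy K) : mulF 1 f ∈ Hardy K := by
  simp only [Hardy, Submodule.mem_iInf, LinearMap.mem_ker, ContinuousLinearMap.coe_coe, innerSL_apply_apply] at hf ⊢
  intro n hn x
  rw [inner_expVec_mulF]
  exact hf (n - 1) (by omega) x

/-- The unilateral shift `S` on the Hardy space `H²(𝕋, K)`: the restriction of the
bilateral shift (multiplication by the variable) to the Hardy space. -/
def S : H2 K →L[ℂ] H2 K where
  toLinearMap := (mulF (E := K) 1).toLinearMap.restrict
    (p := Hardy K) (q := Hardy K) (fun _ hx => mulF_mem_hardy K hx)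
  cont := by
    apply Continuous.subtype_mk
    exact (mulF (E := K) 1).continuous.comp continuous_subtype_val

/-- The operator `Ŝ` on `L²(𝕋, H²(𝕋,K))`, acting pointwisely (on the values) as the
unilateral shift `S`. -/
def Shat : L2 (H2 K) →L[ℂ] L2 (H2 K) := (S K).compLpL 2 μT

lemma integral_fourier_eq_zero {m : ℤ} (hm : m ≠ 0) :
    ∫ t : 𝕋, fourier m t ∂μT = 0 := by
  have h0 : ((0:ℤ)) ≠ m := fun h => hm h.symm
  have h : (inner ℂ (fourierLp (T := 1) 2 (0:ℤ)) (fourierLp 2 m) : ℂ) = 0 :=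
    orthonormal_fourier.2 h0
  rw [MeasureTheory.L2.inner_def] at h
  rw [← h]
  refine integral_congr_ae ?_
  filter_upwards [coeFn_fourierLp 2 (0:ℤ), coeFn_fourierLp 2 m] with t h1 h2
  rw [h1, h2]
  simp [fourier_zero]

lemma const_mem_hardy (x : K) : expVec K 0 x ∈ Hardy K := by
  simp only [Hardy, Submodule.mem_iInf, LinearMap.mem_ker, ContinuousLinearMap.coe_coe, innerSL_apply_apply]
  intro n hn y
  rw [MeasureTheory.L2.inner_def]
  have h : ∀ᵐ t ∂μT, (inner ℂ ((expVec K n y : 𝕋 → K) t) ((expVec K 0 x : 𝕋 → K) t) : ℂ)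
      = fourier (-n) t * (inner ℂ y x : ℂ) := by
    filter_upwards [coeFn_expVec K n y, coeFn_expVec K 0 x] with t h1 h2
    rw [h1, h2, inner_smul_left, inner_smul_right, ← fourier_neg, fourier_zero, one_mul]
  rw [integral_congr_ae h, integral_mul_const,
    integral_fourier_eq_zero (by omega), zero_mul]

/-- The linear embedding of `K` into `H²(𝕋,K)` as constant functions. -/
def constL : K →ₗ[ℂ] H2 K where
  toFun x := ⟨expVec K 0 x, const_mem_hardy K x⟩
  map_add' x y := by
    apply Subtype.ext
    simp only [Submodule.coe_add]
    unfold expVec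
    rw [← map_add]
    congr 1
    ext t
    simp [fourierSmulCM, smul_add]
  map_smul' c x := by
    apply Subtype.ext
    simp only [RingHom.id_apply, SetLike.val_smul]
    unfold expVec
    rw [← _root_.map_smul]
    congr 1
    ext t
    simp [fourierSmulCM]

end Shift


section RangeFunctions

variable {F : Type*} [NormedAddCommGroup F] [InnerProductSpace ℂ F] [CompleteSpace F]

/-- The orthogonal projection onto a closed subspace, as a plain function (defined to be `0`
if the subspace is not closed). -/
def projTo (N : Submodule ℂ F) (x : F) : F :=
  letI := Classical.dec (IsClosed ((N : Set F)))
  if h : IsClosed ((N : Set F)) then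
    haveI : CompleteSpace N := h.completeSpace_coe
    (orthogonalProjection N x : F)
  else 0

/-- A measurable range function in `F`: a map `J` from `𝕋` to closed subspaces of `F` such
that `t ↦ ⟪P_{J(t)} x, y⟫` is measurable for every `x, y ∈ F`. -/
def IsMeasRange (J : 𝕋 → Submodule ℂ F) : Prop :=
  (∀ t, IsClosed ((J t : Set F))) ∧
  ∀ x y : F, Measurable fun t => (inner ℂ (projTo (J t) x) y : ℂ)

/-- The set of `f ∈ L²(𝕋, E)` such that `f(t) ∈ J(t)` for a.e. `t ∈ 𝕋`. -/
def rangeSet {E : Type*} [NormedAddCommGroup E] [NormedSpace ℂ E]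
    (J : 𝕋 → Submodule ℂ E) : Set (L2 E) :=
  {f | ∀ᵐ t ∂μT, (f : 𝕋 → E) t ∈ J t}

end RangeFunctions

section OperatorNotions

variable {E : Type*} [NormedAddCommGroup E] [NormedSpace ℂ E]

/-- A subspace `M` is invariant under the bounded operator `A` if `A(M) ⊆ M`. -/
def InvariantUnder (A : E →L[ℂ] E) (M : Submodule ℂ E) : Prop :=
  ∀ f ∈ M, A f ∈ M

/-- Two bounded operators commute. -/
def CommutesWith (A B : E →L[ℂ] E) : Prop := ∀ f, A (B f) = B (A f)

variable {F : Type*} [NormedAddCommGroup F] [InnerProductSpace ℂ F]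

/-- A subspace `M` is reducing for `A` if both `M` and `M^⊥` are invariant under `A`. -/
def Reducing (A : F →L[ℂ] F) (M : Submodule ℂ F) : Prop :=
  InvariantUnder A M ∧ InvariantUnder A Mᗮ

/-- `Φ` is a partial isometry with initial space `W`: it is isometric on `W` and vanishes
on `W^⊥`. -/
def IsPartialIsometryOn (Φ : F →L[ℂ] F) (W : Submodule ℂ F) : Prop :=
  (∀ f ∈ W, ‖Φ f‖ = ‖f‖) ∧ ∀ f ∈ Wᗮ, Φ f = 0

end OperatorNotions

section FullHardy

variable (K : Type) [NormedAddCommGroup K] [InnerProductSpace ℂ K] [CompleteSpace K]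

/-- For a subspace `N ⊆ K`, the subspace `H²_N` of `H²_K`: those elements of the Hardy space
taking values in `N` almost everywhere. -/
def hardyIn (N : Submodule ℂ K) : Submodule ℂ (H2 K) where
  carrier := {g | ∀ᵐ z ∂μT, ((g : L2 K) : 𝕋 → K) z ∈ N}
  zero_mem' := by
    have h0 : ((0 : H2 K) : L2 K) = 0 := rfl
    rw [Set.mem_setOf_eq, h0]
    filter_upwards [Lp.coeFn_zero K 2 μT] with z hz
    rw [hz]
    exact N.zero_mem
  add_mem' := by
    intro a b ha hb
    have h0 : ((a + b : H2 K) : L2 K) = (a : L2 K) + (b : L2 K) := rfl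
    rw [Set.mem_setOf_eq, h0]
    filter_upwards [ha, hb, Lp.coeFn_add (a : L2 K) (b : L2 K)] with z ha' hb' hadd
    rw [hadd]
    exact N.add_mem ha' hb'
  smul_mem' := by
    intro c a ha
    have h0 : ((c • a : H2 K) : L2 K) = c • (a : L2 K) := rfl
    rw [Set.mem_setOf_eq, h0]
    filter_upwards [ha, Lp.coeFn_smul c (a : L2 K)] with z ha' hsmul
    rw [hsmul]
    exact N.smul_mem c ha'

/-- The set of `f ∈ L²(𝕋, H²_K)` with `f(t) ∈ H²_{J(t)}` for a.e. `t`. If `J` is a measurable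
range function in `K`, this is the full-Hardy subspace with base `J`. -/
def fullHardySet (J : 𝕋 → Submodule ℂ K) : Set (L2 (H2 K)) :=
  {f | ∀ᵐ t ∂μT, (f : 𝕋 → H2 K) t ∈ hardyIn K (J t)}

/-- A subspace `W ⊆ L²(𝕋, H²_K)` is full-Hardy if it is of the form
`{f : f(t) ∈ H²_{J(t)} a.e.}` for some measurable range function `J` in `K`. -/
def IsFullHardy (W : Submodule ℂ (L2 (H2 K))) : Prop :=
  ∃ J : 𝕋 → Submodule ℂ K, IsMeasRange J ∧ (W : Set (L2 (H2 K))) = fullHardySet K J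

end FullHardy

section Dimension

open scoped Classical in
/-- The Hilbert-space dimension of a subspace, as an element of `ℕ∞` (in a separable ambient
space this is the cardinality of any orthonormal basis). -/
def dimSub {F : Type*} [NormedAddCommGroup F] [InnerProductSpace ℂ F]
    (N : Submodule ℂ F) : ℕ∞ :=
  if FiniteDimensional ℂ ↥N then (Module.finrank ℂ ↥N : ℕ∞) else ⊤

end Dimension

section ScalarCase

/-- Evaluation of an element of the scalar Hardy space (via its chosen representative). -/
def ev (g : H2 ℂ) (z : 𝕋) : ℂ := ((g : L2 ℂ) : 𝕋 → ℂ) z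

/-- Iterated evaluation of an element of `L²(𝕋, H²)`. -/
def ev2 (f : L2 (H2 ℂ)) (t z : 𝕋) : ℂ := ev ((f : 𝕋 → H2 ℂ) t) z

/-- A function `h ∈ H²` is inner if `|h(z)| = 1` for a.e. `z ∈ 𝕋`. -/
def IsInnerFn (g : H2 ℂ) : Prop := ∀ᵐ z ∂μT, ‖ev g z‖ = 1

lemma ev_zero : ∀ᵐ z ∂μT, ev (0 : H2 ℂ) z = 0 := by
  have h0 : ((0 : H2 ℂ) : L2 ℂ) = 0 := rfl
  unfold ev
  rw [h0]
  filter_upwards [Lp.coeFn_zero ℂ 2 μT] with z hz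
  rw [hz]
  rfl

lemma ev_add (u v : H2 ℂ) : ∀ᵐ z ∂μT, ev (u + v) z = ev u z + ev v z := by
  have h0 : ((u + v : H2 ℂ) : L2 ℂ) = (u : L2 ℂ) + (v : L2 ℂ) := rfl
  unfold ev
  rw [h0]
  filter_upwards [Lp.coeFn_add (u : L2 ℂ) (v : L2 ℂ)] with z hz
  rw [hz]
  rfl

lemma ev_smul (c : ℂ) (u : H2 ℂ) : ∀ᵐ z ∂μT, ev (c • u) z = c * ev u z := by
  have h0 : ((c • u : H2 ℂ) : L2 ℂ) = c • (u : L2 ℂ) := rfl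
  unfold ev
  rw [h0]
  filter_upwards [Lp.coeFn_smul c (u : L2 ℂ)] with z hz
  rw [hz]
  rfl

/-- For `w ∈ H²`, the subspace `w·H² = {w·k : k ∈ H²}` of `H²` (membership described via
a.e. pointwise multiplication of representatives). -/
def mulSet (w : H2 ℂ) : Submodule ℂ (H2 ℂ) where
  carrier := {u | ∃ k : H2 ℂ, ∀ᵐ z ∂μT, ev u z = ev w z * ev k z}
  zero_mem' := by
    refine ⟨0, ?_⟩
    filter_upwards [ev_zero] with z hz
    rw [hz, mul_zero]
  add_mem' := by
    rintro u v ⟨k₁, h₁⟩ ⟨k₂, h₂⟩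
    refine ⟨k₁ + k₂, ?_⟩
    filter_upwards [h₁, h₂, ev_add u v, ev_add k₁ k₂] with z e1 e2 e3 e4
    rw [e3, e1, e2, e4, mul_add]
  smul_mem' := by
    rintro c u ⟨k, h⟩
    refine ⟨c • k, ?_⟩
    filter_upwards [h, ev_smul c u, ev_smul c k] with z e1 e2 e3
    rw [e2, e1, e3]
    ring

/-- The set `φ·L²(𝕋, H²) = {φ g : g ∈ L²(𝕋,H²)}`, where `(φ g)(t)(z) = φ(t)(z)·g(t)(z)`. -/
def timesSet (φ : L2 (H2 ℂ)) : Set (L2 (H2 ℂ)) :=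
  {h | ∃ g : L2 (H2 ℂ), ∀ᵐ t ∂μT, ∀ᵐ z ∂μT, ev2 h t z = ev2 φ t z * ev2 g t z}

end ScalarCase

/-!
Since `W` is invariant under every `Uⁿ` (`n ∈ ℤ`) and `Ŝ` commutes with `U`, the wandering subspace
`R = W ⊖ ŜW` is invariant under every `Uⁿ` as well; as `U* = U⁻¹`, it is reducing.

For `f ∈ R`, `m ≥ 0` and `x ∈ K`, the section `g(λ) = z^m P_{J(λ)} x` is bounded and lies in `W`,
so `f ⊥ Ŝ Uⁿ g` for all `n`: every Fourier coefficient of the `L²` function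
`λ ↦ ⟪z^{m+1} P_{J(λ)} x, f(λ)⟫` vanishes. Letting `x` run through a countable dense set, for a.e. `λ`
the function `f(λ) ∈ H²_{J(λ)}` is orthogonal to `zᵏ J(λ)` for every `k ≥ 1`, hence is a constant in
`J(λ)`. Conversely a section of constants is pointwise orthogonal to `S H²_K`. Finally, the
projection onto the constants `J(λ) ⊆ H²_K` is `F ↦ P_{J(λ)} F̂(0)`, which transfers the measurability
of `J` to the new range function. Measurability of `λ ↦ P_{J(λ)} x` itself comes from the formula
`‖P_{J(λ)} x - y‖² = Re ⟪P_{J(λ)} x, x⟫ - 2 Re ⟪P_{J(λ)} x, y⟫ + ‖y‖²` and separability of `K`.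
-/

open TopologicalSpace

theorem measurable_of_measurable_dist {α β : Type*} [MeasurableSpace α] [PseudoMetricSpace β]
    [SecondCountableTopology β] [MeasurableSpace β] [BorelSpace β] {f : α → β}
    (hf : ∀ y, Measurable fun a => dist (f a) y) : Measurable f := by
  refine measurable_of_isOpen fun U hU => ?_
  choose! ε hε hεU using Metric.isOpen_iff.1 hU
  obtain ⟨T, hTU, hTc, hT⟩ := isOpen_biUnion_countable U (fun y => Metric.ball y (ε y))
    fun _ _ => Metric.isOpen_ball
  have hU : U = ⋃ y ∈ T, Metric.ball y (ε y) :=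
    hT ▸ (Set.Subset.antisymm (fun y hy => Set.mem_biUnion hy (Metric.mem_ball_self (hε y hy)))
      (Set.iUnion₂_subset hεU))
  rw [hU, Set.preimage_iUnion₂]
  exact .biUnion hTc fun y _ => measurableSet_lt (hf y) measurable_const

section ProjTo

variable {F : Type*} [NormedAddCommGroup F] [InnerProductSpace ℂ F] [CompleteSpace F]
  {N : Submodule ℂ F}

lemma projTo_eq_starProjection [N.HasOrthogonalProjection] (x : F) :
    projTo N x = N.starProjection x := by
  have hN : IsClosed (N : Set F) := N.orthogonal_orthogonal ▸ Nᗮ.isClosed_orthogonal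
  rw [projTo, dif_pos hN]
  rfl

lemma projTo_mem (hN : IsClosed (N : Set F)) (x : F) : projTo N x ∈ N := by
  have := hN.completeSpace_coe
  rw [projTo_eq_starProjection]
  exact N.starProjection_apply_mem x

lemma norm_projTo_le (hN : IsClosed (N : Set F)) (x : F) : ‖projTo N x‖ ≤ ‖x‖ := by
  have := hN.completeSpace_coe
  rw [projTo_eq_starProjection]
  exact N.norm_starProjection_apply_le x

lemma sub_projTo_mem_orthogonal (hN : IsClosed (N : Set F)) (x : F) : x - projTo N x ∈ Nᗮ := by
  have := hN.completeSpace_coe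
  rw [projTo_eq_starProjection]
  exact N.sub_starProjection_mem_orthogonal x

lemma continuous_projTo (hN : IsClosed (N : Set F)) : Continuous (projTo N) := by
  have := hN.completeSpace_coe
  simpa only [funext projTo_eq_starProjection] using N.starProjection.continuous

lemma norm_projTo_sq (hN : IsClosed (N : Set F)) (x : F) :
    ‖projTo N x‖ ^ 2 = RCLike.re ⟪projTo N x, x⟫_ℂ := by
  have hx : ⟪projTo N x, x - projTo N x⟫_ℂ = 0 :=
    (sub_projTo_mem_orthogonal hN x) _ (projTo_mem hN x)
  rw [inner_sub_right, sub_eq_zero] at hx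
  rw [hx, inner_self_eq_norm_sq]

lemma stronglyMeasurable_projTo [SecondCountableTopology F] {J : 𝕋 → Submodule ℂ F}
    (hJ : IsMeasRange J) (x : F) : StronglyMeasurable fun t => projTo (J t) x := by
  borelize F
  refine (measurable_of_measurable_dist fun y => ?_).stronglyMeasurable
  have hdist : (fun t => dist (projTo (J t) x) y) = fun t => √(RCLike.re ⟪projTo (J t) x, x⟫_ℂ
      - 2 * RCLike.re ⟪projTo (J t) x, y⟫_ℂ + ‖y‖ ^ 2) := by
    funext t
    rw [dist_eq_norm, ← norm_projTo_sq (hJ.1 t), ← norm_sub_sq (𝕜 := ℂ),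
      Real.sqrt_sq (norm_nonneg _)]
  rw [hdist]
  exact (((hJ.2 x x).re.sub (measurable_const.mul (hJ.2 x y).re)).add measurable_const).sqrt

end ProjTo

lemma eq_zero_of_forall_inner_fourierLp_eq_zero {ψ : L2 ℂ}
    (h : ∀ n : ℤ, ⟪fourierLp 2 n, ψ⟫_ℂ = 0) : ψ = 0 := by
  refine fourierBasis.repr.map_eq_zero_iff.1 (lp.ext (funext fun n => ?_))
  rw [HilbertBasis.repr_apply_apply, coe_fourierBasis, h n]
  rfl

section MulF

variable {E : Type*} [NormedAddCommGroup E] [InnerProductSpace ℂ E]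

lemma inner_mulF_left (n : ℤ) (u v : L2 E) : ⟪mulF n u, v⟫_ℂ = ⟪u, mulF (-n) v⟫_ℂ := by
  rw [L2.inner_def, L2.inner_def]
  refine integral_congr_ae ?_
  filter_upwards [coeFn_mulF n u, coeFn_mulF (-n) v] with t hu hv
  rw [hu, hv, inner_smul_left, inner_smul_right, fourier_neg]

/-- The pointwise inner product `t ↦ ⟪u t, v t⟫` has Fourier coefficients `⟪Uⁿ u, v⟫`; boundedness
of `u` keeps it in `L²`, where the Fourier basis is complete. -/
lemma ae_inner_eq_zero_of_forall_inner_mulF {u v : L2 E} {C : ℝ}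
    (hu : ∀ᵐ t ∂μT, ‖(u : 𝕋 → E) t‖ ≤ C) (h : ∀ n : ℤ, ⟪mulF n u, v⟫_ℂ = 0) :
    ∀ᵐ t ∂μT, ⟪(u : 𝕋 → E) t, (v : 𝕋 → E) t⟫_ℂ = 0 := by
  have hψ : MemLp (fun t => ⟪(u : 𝕋 → E) t, (v : 𝕋 → E) t⟫_ℂ) 2 μT := by
    refine (Lp.memLp v).of_le_mul (c := C) ((Lp.aestronglyMeasurable u).inner
      (Lp.aestronglyMeasurable v)) ?_
    filter_upwards [hu] with t ht
    exact (norm_inner_le_norm _ _).trans (mul_le_mul_of_nonneg_right ht (norm_nonneg _))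
  have hzero : hψ.toLp = 0 := eq_zero_of_forall_inner_fourierLp_eq_zero fun n => by
    rw [← h n, L2.inner_def, L2.inner_def]
    refine integral_congr_ae ?_
    filter_upwards [hψ.coeFn_toLp, coeFn_fourierLp 2 n, coeFn_mulF n u] with t h1 h2 h3
    rw [h1, h2, h3, inner_smul_left, RCLike.inner_apply, mul_comm]
  filter_upwards [hψ.coeFn_toLp, Lp.coeFn_zero ℂ 2 μT] with t h1 h2
  rw [← h1, hzero, h2, Pi.zero_apply]

end MulF

section ExpVec

variable {K : Type} [NormedAddCommGroup K] [InnerProductSpace ℂ K]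

lemma inner_expVec_eq_zero_of_mem_hardy {u : L2 K} (hu : u ∈ Hardy K) {n : ℤ} (hn : n < 0)
    (x : K) : ⟪expVec K n x, u⟫_ℂ = 0 := by
  simp only [Hardy, Submodule.mem_iInf, LinearMap.mem_ker, ContinuousLinearMap.coe_coe,
    innerSL_apply_apply] at hu
  exact hu n hn x

variable [CompleteSpace K]

lemma inner_expVec (n : ℤ) (x : K) (u : L2 K) :
    ⟪expVec K n x, u⟫_ℂ = ∫ t, conj (fourier n t) * ⟪x, (u : 𝕋 → K) t⟫_ℂ ∂μT := by
  rw [L2.inner_def]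
  refine integral_congr_ae ?_
  filter_upwards [coeFn_expVec K n x] with t h
  rw [h, inner_smul_left]

lemma norm_expVec (n : ℤ) (x : K) : ‖expVec K n x‖ = ‖x‖ := by
  have h : eLpNorm (expVec K n x : 𝕋 → K) 2 μT = eLpNorm (fun _ : 𝕋 => x) 2 μT := by
    refine eLpNorm_congr_norm_ae ?_
    filter_upwards [coeFn_expVec K n x] with t h
    rw [h, norm_smul, norm_fourier, one_mul]
  rw [Lp.norm_def, h, eLpNorm_const x two_ne_zero (NeZero.ne μT)]
  simp

lemma expVec_sub (n : ℤ) (x y : K) : expVec K n (x - y) = expVec K n x - expVec K n y := by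
  apply Lp.ext
  filter_upwards [coeFn_expVec K n (x - y), coeFn_expVec K n x, coeFn_expVec K n y,
    Lp.coeFn_sub (expVec K n x) (expVec K n y)] with t h h₁ h₂ h₃
  rw [h, h₃, Pi.sub_apply, h₁, h₂, smul_sub]

lemma continuous_expVec (n : ℤ) : Continuous (expVec K n) :=
  (Isometry.of_dist_eq fun x y => by
    rw [dist_eq_norm, dist_eq_norm, ← expVec_sub, norm_expVec]).continuous

lemma inner_expVec_expVec (m n : ℤ) (x y : K) :
    ⟪expVec K m x, expVec K n y⟫_ℂ = if m = n then ⟪x, y⟫_ℂ else 0 := by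
  have h : ∀ᵐ t ∂μT, conj (fourier m t) * ⟪x, (expVec K n y : 𝕋 → K) t⟫_ℂ
      = fourier (n - m) t * ⟪x, y⟫_ℂ := by
    filter_upwards [coeFn_expVec K n y] with t h
    rw [h, inner_smul_right, ← fourier_neg, ← mul_assoc, ← fourier_add, neg_add_eq_sub]
  rw [inner_expVec, integral_congr_ae h, integral_mul_const]
  split_ifs with hmn
  · simp [hmn]
  · rw [integral_fourier_eq_zero (sub_ne_zero.2 (Ne.symm hmn)), zero_mul]

lemma expVec_mem_hardy {n : ℤ} (hn : 0 ≤ n) (x : K) : expVec K n x ∈ Hardy K := by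
  simp only [Hardy, Submodule.mem_iInf, LinearMap.mem_ker, ContinuousLinearMap.coe_coe,
    innerSL_apply_apply]
  intro m hm y
  rw [inner_expVec_expVec, if_neg (by omega)]

lemma mulF_expVec (n k : ℤ) (x : K) : mulF n (expVec K k x) = expVec K (k + n) x := by
  apply Lp.ext
  filter_upwards [coeFn_mulF n (expVec K k x), coeFn_expVec K k x,
    coeFn_expVec K (k + n) x] with t h₁ h₂ h₃
  rw [h₁, h₂, h₃, smul_smul, fourier_add, mul_comm]

lemma eq_zero_of_forall_inner_expVec [SecondCountableTopology K] {u : L2 K}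
    (h : ∀ (n : ℤ) (x : K), ⟪expVec K n x, u⟫_ℂ = 0) : u = 0 := by
  refine Lp.eq_zero_iff_ae_eq_zero.2 (ae_eq_zero_of_forall_inner (𝕜 := ℂ) fun x => ?_)
  have hconst : ∀ᵐ t ∂μT, ‖(expVec K 0 x : 𝕋 → K) t‖ ≤ ‖x‖ := by
    filter_upwards [coeFn_expVec K 0 x] with t ht
    rw [ht, fourier_zero, one_smul]
  filter_upwards [coeFn_expVec K 0 x, ae_inner_eq_zero_of_forall_inner_mulF hconst
    fun n => by rw [mulF_expVec, zero_add, h]] with t h₁ h₂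
  rwa [h₁, fourier_zero, one_smul] at h₂

lemma inner_expVec_zero (x : K) (u : L2 K) :
    ⟪expVec K 0 x, u⟫_ℂ = ⟪x, fourierCoeff (u : 𝕋 → K) 0⟫_ℂ := by
  have hu : Integrable (fun t => fourier (-0) t • (u : 𝕋 → K) t) μT := by
    simpa using (Lp.memLp u).integrable one_le_two
  rw [inner_expVec, fourierCoeff, ← integral_inner hu]
  simp

lemma fourierCoeff_zero_mem {N : Submodule ℂ K} (hN : IsClosed (N : Set K)) {u : L2 K}
    (hu : ∀ᵐ t ∂μT, (u : 𝕋 → K) t ∈ N) : fourierCoeff (u : 𝕋 → K) 0 ∈ N := by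
  simpa [fourierCoeff] using (N.restrictScalars ℝ).convex.integral_mem hN hu
    ((Lp.memLp u).integrable one_le_two)

lemma inner_expVec_eq_zero_of_mem_orthogonal {N : Submodule ℂ K} {y : K} (hy : y ∈ Nᗮ)
    (n : ℤ) {u : L2 K} (hu : ∀ᵐ t ∂μT, (u : 𝕋 → K) t ∈ N) : ⟪expVec K n y, u⟫_ℂ = 0 := by
  rw [inner_expVec, ← integral_zero 𝕋 ℂ]
  refine integral_congr_ae ?_
  filter_upwards [hu] with t ht
  rw [(N.mem_orthogonal' y).1 hy _ ht, mul_zero]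

end ExpVec

section Constants

variable {K : Type} [NormedAddCommGroup K] [InnerProductSpace ℂ K] [CompleteSpace K]
  {N : Submodule ℂ K}

lemma coe_constL (x : K) : ((constL K x : H2 K) : L2 K) = expVec K 0 x := rfl

lemma inner_constL_left (w : K) (u : H2 K) :
    ⟪constL K w, u⟫_ℂ = ⟪w, fourierCoeff ((u : L2 K) : 𝕋 → K) 0⟫_ℂ := by
  rw [Submodule.coe_inner, coe_constL, inner_expVec_zero]

lemma isClosed_map_constL (hN : IsClosed (N : Set K)) :
    IsClosed (N.map (constL K) : Set (H2 K)) := by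
  have hiso : Isometry (constL K) := Isometry.of_dist_eq fun x y => by
    rw [dist_eq_norm, dist_eq_norm, ← map_sub, ← norm_coe, coe_constL, norm_expVec]
  rw [Submodule.map_coe]
  exact ((isComplete_image_iff hiso.isUniformInducing).2 hN.isComplete).isClosed

lemma projTo_map_constL (hN : IsClosed (N : Set K)) (u : H2 K) :
    projTo (N.map (constL K)) u = constL K (projTo N (fourierCoeff ((u : L2 K) : 𝕋 → K) 0)) := by
  have := (isClosed_map_constL hN).completeSpace_coe
  rw [projTo_eq_starProjection]
  refine eq_starProjection_of_mem_of_inner_eq_zero (mem_map_of_mem (projTo_mem hN _)) ?_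
  rintro _ ⟨y, hy, rfl⟩
  rw [← inner_conj_symm, inner_sub_right, inner_constL_left, Submodule.coe_inner, coe_constL,
    coe_constL, inner_expVec_expVec, if_pos rfl, ← inner_sub_right,
    (sub_projTo_mem_orthogonal hN _) y hy, map_zero]

lemma isMeasRange_map_constL {J : 𝕋 → Submodule ℂ K} (hJ : IsMeasRange J) :
    IsMeasRange fun t => (J t).map (constL K) := by
  refine ⟨fun t => isClosed_map_constL (hJ.1 t), fun u v => ?_⟩
  simp_rw [projTo_map_constL (hJ.1 _), inner_constL_left]
  exact hJ.2 _ _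

/-- All Fourier coefficients of `u - û(0)` vanish: the negative ones because `u ∈ H²`, the positive
ones by `horth`, which extends from `P_N x` to `x` because `x - P_N x ⊥ N` while `u` is `N`-valued. -/
lemma mem_map_constL_of_forall_inner_expVec_projTo [SecondCountableTopology K]
    (hN : IsClosed (N : Set K)) {u : H2 K} (hval : ∀ᵐ t ∂μT, ((u : L2 K) : 𝕋 → K) t ∈ N)
    (horth : ∀ (m : ℕ) (x : K), ⟪expVec K (m + 1) (projTo N x), (u : L2 K)⟫_ℂ = 0) :
    u ∈ N.map (constL K) := by
  set a := fourierCoeff ((u : L2 K) : 𝕋 → K) 0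
  suffices h : (u : L2 K) = expVec K 0 a from
    ⟨a, fourierCoeff_zero_mem hN hval, Subtype.ext h.symm⟩
  rw [← sub_eq_zero]
  refine eq_zero_of_forall_inner_expVec fun n x => ?_
  rw [inner_sub_right, inner_expVec_expVec]
  rcases lt_trichotomy n 0 with hn | rfl | hn
  · rw [inner_expVec_eq_zero_of_mem_hardy u.2 hn, if_neg hn.ne, sub_zero]
  · rw [inner_expVec_zero, if_pos rfl, sub_self]
  · obtain ⟨m, rfl⟩ : ∃ m : ℕ, n = m + 1 := ⟨(n - 1).toNat, by omega⟩
    have hsplit : expVec K (m + 1) x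
        = expVec K (m + 1) (projTo N x) + expVec K (m + 1) (x - projTo N x) := by
      rw [expVec_sub, add_sub_cancel]
    rw [if_neg hn.ne', sub_zero, hsplit, inner_add_left, horth,
      inner_expVec_eq_zero_of_mem_orthogonal (sub_projTo_mem_orthogonal hN x) _ hval, zero_add]

end Constants

section Invariance

variable {F : Type*} [NormedAddCommGroup F] [InnerProductSpace ℂ F] {M M' : Submodule ℂ F}
  {A B : F →L[ℂ] F}

lemma InvariantUnder.inf (hM : InvariantUnder A M) (hM' : InvariantUnder A M') :
    InvariantUnder A (M ⊓ M') :=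
  fun f hf => ⟨hM f hf.1, hM' f hf.2⟩

lemma InvariantUnder.map (hM : InvariantUnder A M) (hAB : ∀ f, A (B f) = B (A f)) :
    InvariantUnder A (M.map (B : F →ₗ[ℂ] F)) := by
  rintro _ ⟨f, hf, rfl⟩
  exact ⟨A f, hM f hf, (hAB f).symm⟩

lemma InvariantUnder.orthogonal (hM : InvariantUnder A M)
    (hAB : ∀ u v, ⟪A u, v⟫_ℂ = ⟪u, B v⟫_ℂ) : InvariantUnder B Mᗮ :=
  fun v hv u hu => by rw [← hAB]; exact hv _ (hM u hu)

lemma reducing_mulF_of_forall_invariantUnder {E : Type*} [NormedAddCommGroup E]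
    [InnerProductSpace ℂ E] {M : Submodule ℂ (L2 E)} (hM : ∀ n, InvariantUnder (mulF n) M) :
    Reducing (mulF 1) M :=
  ⟨hM 1, (hM (-1)).orthogonal fun u v => by rw [inner_mulF_left, neg_neg]⟩

end Invariance

section FullHardySubspace

variable {K : Type} [NormedAddCommGroup K] [InnerProductSpace ℂ K] {J : 𝕋 → Submodule ℂ K}

lemma mulF_mem_fullHardySet (n : ℤ) {g : L2 (H2 K)} (hg : g ∈ fullHardySet K J) :
    mulF n g ∈ fullHardySet K J := by
  filter_upwards [hg, coeFn_mulF n g] with t h₁ h₂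
  rw [h₂]
  exact Submodule.smul_mem _ _ h₁

variable [CompleteSpace K]

lemma coe_S (u : H2 K) : ((S K u : H2 K) : L2 K) = mulF 1 (u : L2 K) := rfl

lemma coeFn_Shat (g : L2 (H2 K)) :
    (Shat K g : 𝕋 → H2 K) =ᵐ[μT] fun t => S K ((g : 𝕋 → H2 K) t) :=
  ContinuousLinearMap.coeFn_compLpL _ _

lemma mulF_Shat (n : ℤ) (g : L2 (H2 K)) : mulF n (Shat K g) = Shat K (mulF n g) := by
  apply Lp.ext
  filter_upwards [coeFn_Shat (mulF n g), coeFn_mulF n g, coeFn_mulF n (Shat K g),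
    coeFn_Shat g] with t h₁ h₂ h₃ h₄
  rw [h₃, h₄, h₁, h₂, _root_.map_smul]

lemma invariantUnder_mulF_orthogonal_map_Shat {W : Submodule ℂ (L2 (H2 K))}
    (hW : ∀ n, InvariantUnder (E := L2 (H2 K)) (mulF n) W) (n : ℤ) :
    InvariantUnder (mulF n) (Submodule.orthogonal (𝕜 := ℂ) (E := L2 (H2 K))
      (W.map (Shat K : L2 (H2 K) →ₗ[ℂ] L2 (H2 K)))) :=
  ((hW (-n)).map (mulF_Shat (-n))).orthogonal fun u v => by rw [inner_mulF_left, neg_neg]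

lemma inner_S_constL (u : H2 K) (a : K) : ⟪S K u, constL K a⟫_ℂ = 0 := by
  rw [Submodule.coe_inner, coe_S, coe_constL, ← inner_conj_symm, inner_expVec_mulF,
    inner_expVec_eq_zero_of_mem_hardy u.2 (by norm_num), map_zero]

lemma mem_fullHardySet_of_ae_mem_map_constL {f : L2 (H2 K)}
    (hf : ∀ᵐ t ∂μT, (f : 𝕋 → H2 K) t ∈ (J t).map (constL K)) : f ∈ fullHardySet K J := by
  filter_upwards [hf] with t ⟨a, ha, hfa⟩
  rw [← hfa]
  filter_upwards [coeFn_expVec K 0 a] with z hz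
  rw [coe_constL, hz]
  exact Submodule.smul_mem _ _ ha

lemma inner_Shat_eq_zero_of_ae_mem_map_constL {f : L2 (H2 K)}
    (hf : ∀ᵐ t ∂μT, (f : 𝕋 → H2 K) t ∈ (J t).map (constL K)) (g : L2 (H2 K)) :
    ⟪Shat K g, f⟫_ℂ = 0 := by
  rw [L2.inner_def]
  refine integral_eq_zero_of_ae ?_
  filter_upwards [hf, coeFn_Shat g] with t ⟨a, _, hfa⟩ hg
  rw [hg, ← hfa, inner_S_constL, Pi.zero_apply]

variable [SecondCountableTopology K]

lemma exists_mem_fullHardySet_expVec_projTo (hJ : IsMeasRange J) (m : ℕ) (x : K) :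
    ∃ g ∈ fullHardySet K J, ∀ᵐ t ∂μT, (((g : 𝕋 → H2 K) t : H2 K) : L2 K)
      = expVec K m (projTo (J t) x) ∧ ‖(g : 𝕋 → H2 K) t‖ ≤ ‖x‖ := by
  let expVecH : K → H2 K := fun y => ⟨expVec K m y, expVec_mem_hardy (Int.natCast_nonneg m) y⟩
  have hbound : ∀ t, ‖expVecH (projTo (J t) x)‖ ≤ ‖x‖ := fun t =>
    (norm_expVec _ _).trans_le (norm_projTo_le (hJ.1 t) x)
  have hg : MemLp (fun t => expVecH (projTo (J t) x)) 2 μT :=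
    .of_bound (((continuous_expVec _).subtype_mk _).comp_stronglyMeasurable
      (stronglyMeasurable_projTo hJ x)).aestronglyMeasurable ‖x‖ (.of_forall hbound)
  refine ⟨hg.toLp, ?_, ?_⟩ <;> filter_upwards [hg.coeFn_toLp] with t ht <;> rw [ht]
  · filter_upwards [coeFn_expVec K m (projTo (J t) x)] with z hz
    rw [hz]
    exact Submodule.smul_mem _ _ (projTo_mem (hJ.1 t) x)
  · exact ⟨rfl, hbound t⟩

lemma ae_inner_expVec_projTo_eq_zero (hJ : IsMeasRange J) {f : L2 (H2 K)}
    (hf : ∀ g ∈ fullHardySet K J, ⟪Shat K g, f⟫_ℂ = 0) (m : ℕ) (x : K) :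
    ∀ᵐ t ∂μT, ⟪expVec K (m + 1) (projTo (J t) x), (((f : 𝕋 → H2 K) t : H2 K) : L2 K)⟫_ℂ = 0 := by
  obtain ⟨g, hgW, hg⟩ := exists_mem_fullHardySet_expVec_projTo hJ m x
  have hbound : ∀ᵐ t ∂μT, ‖(Shat K g : 𝕋 → H2 K) t‖ ≤ ‖S K‖ * ‖x‖ := by
    filter_upwards [coeFn_Shat g, hg] with t ht hgt
    rw [ht]
    exact (S K).le_opNorm_of_le hgt.2
  filter_upwards [coeFn_Shat g, hg, ae_inner_eq_zero_of_forall_inner_mulF hbound fun n => by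
    rw [mulF_Shat, hf _ (mulF_mem_fullHardySet n hgW)]] with t h₁ hgt h₂
  rwa [h₁, Submodule.coe_inner, coe_S, hgt.1, mulF_expVec] at h₂

lemma ae_mem_map_constL_of_forall_inner_Shat_eq_zero (hJ : IsMeasRange J) {f : L2 (H2 K)}
    (hfW : f ∈ fullHardySet K J) (hf : ∀ g ∈ fullHardySet K J, ⟪Shat K g, f⟫_ℂ = 0) :
    ∀ᵐ t ∂μT, (f : 𝕋 → H2 K) t ∈ (J t).map (constL K) := by
  have h := ae_all_iff.2 fun m => ae_all_iff.2 fun i =>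
    ae_inner_expVec_projTo_eq_zero hJ hf m (denseSeq K i)
  filter_upwards [hfW, h] with t hval horth
  refine mem_map_constL_of_forall_inner_expVec_projTo (hJ.1 t) hval fun m => ?_
  refine congrFun ((denseRange_denseSeq K).equalizer ?_ continuous_const (funext (horth m)))
  exact ((continuous_expVec _).comp (continuous_projTo (hJ.1 t))).inner continuous_const

end FullHardySubspace

section Statements

variable (K : Type) [NormedAddCommGroup K] [InnerProductSpace ℂ K] [CompleteSpace K]
  [SecondCountableTopology K]

theorem statement19 (W : Submodule ℂ (L2 (H2 K))) (J : 𝕋 → Submodule ℂ K)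
    (hJ : IsMeasRange J) (hW : (W : Set (L2 (H2 K))) = fullHardySet K J) :
    Reducing (mulF 1) (W ⊓ Submodule.orthogonal (𝕜 := ℂ) (E := L2 (H2 K))
      (Submodule.map (Shat K : L2 (H2 K) →ₗ[ℂ] L2 (H2 K)) W)) ∧
    IsMeasRange (fun t => Submodule.map (constL K) (J t)) ∧
    ((↑(W ⊓ Submodule.orthogonal (𝕜 := ℂ) (E := L2 (H2 K))
        (Submodule.map (Shat K : L2 (H2 K) →ₗ[ℂ] L2 (H2 K)) W)) : Set (L2 (H2 K))) =
      rangeSet (fun t => Submodule.map (constL K) (J t))) := by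
  have hmemW : ∀ f, f ∈ W ↔ f ∈ fullHardySet K J := fun f => by rw [← SetLike.mem_coe, hW]
  have hWinv : ∀ n, InvariantUnder (mulF n) W := fun n f hf =>
    (hmemW _).2 (mulF_mem_fullHardySet n ((hmemW f).1 hf))
  have horth : ∀ f, f ∈ Submodule.orthogonal (𝕜 := ℂ) (E := L2 (H2 K))
      (W.map (Shat K : L2 (H2 K) →ₗ[ℂ] L2 (H2 K))) ↔
      ∀ g ∈ fullHardySet K J, ⟪Shat K g, f⟫_ℂ = 0 := fun f => by
    simp only [Submodule.mem_orthogonal, Submodule.mem_map, ContinuousLinearMap.coe_coe,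
      forall_exists_index, and_imp, forall_apply_eq_imp_iff₂, hmemW]
  refine ⟨reducing_mulF_of_forall_invariantUnder fun n =>
      (hWinv n).inf (invariantUnder_mulF_orthogonal_map_Shat hWinv n),
    isMeasRange_map_constL hJ, Set.ext fun f => ⟨fun ⟨hfW, hf⟩ => ?_, fun hf => ?_⟩⟩
  · exact ae_mem_map_constL_of_forall_inner_Shat_eq_zero hJ ((hmemW f).1 hfW) ((horth f).1 hf)
  · exact ⟨(hmemW f).2 (mem_fullHardySet_of_ae_mem_map_constL hf),
      (horth f).2 fun g _ => inner_Shat_eq_zero_of_ae_mem_map_constL hf g⟩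

end Statements

end ShiftPaper
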